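/- Consider a finite collection of random variables V partitioned into clusters C_1, ..., C_K, with latent variables U. Suppose the joint distribution factorizes according to an ADMG G on V: P(v) = Σ_u P(u) Π_{V_k ∈ V} P(v_k | pa(v_k), u_k), where pa(v_k) are the G-parents of V_k and u_k its latent parents. Then P also factorizes according to the quotient C-DAG G_C: P(c) = Σ_u P(u) Π_{C_k} P(c_k | pa(c_k), u'_k), where pa(c_k) denotes the union of the clusters that are parents of C_k in G_C, and the sets U'_k ⊆ U satisfy: U'_i ∩ U'_j ≠ ∅ iff there is a bidirected edge between C_i and C_j in G_C. -/
import Mathlib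


/-- An acyclic directed mixed graph skeleton: a directed edge relation
together with a symmetric bidirected edge relation. -/
structure MixedGraph (V : Type) where
  dir : V → V → Prop
  bi : V → V → Prop
  bi_symm : ∀ a b, bi a b → bi b a

namespace MixedGraph

variable {V : Type} {I : Type}

/-- Adjacency: a directed edge in either orientation or a bidirected edge. -/
def Adj (G : MixedGraph V) (a b : V) : Prop :=
  G.dir a b ∨ G.dir b a ∨ G.bi a b

/-- Acyclicity of the directed part. -/
def Acyclic (G : MixedGraph V) : Prop :=
  ∀ a, ¬ Relation.TransGen G.dir a a

/-- The quotient (cluster) graph of `G` by the partition given by the fibers of `π`. -/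
def quot (G : MixedGraph V) (π : V → I) : MixedGraph I where
  dir i j := i ≠ j ∧ ∃ a b, π a = i ∧ π b = j ∧ G.dir a b
  bi i j := i ≠ j ∧ ∃ a b, π a = i ∧ π b = j ∧ G.bi a b
  bi_symm := by
    rintro i j ⟨hne, a, b, ha, hb, h⟩
    exact ⟨hne.symm, b, a, hb, ha, G.bi_symm a b h⟩

/-- The mutilated graph: delete all edges with an arrowhead into `X`
and all directed edges out of `Z`. -/
def mutil (G : MixedGraph V) (X Z : Set V) : MixedGraph V where
  dir a b := G.dir a b ∧ b ∉ X ∧ a ∉ Z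
  bi a b := G.bi a b ∧ a ∉ X ∧ b ∉ X
  bi_symm := by
    rintro a b ⟨h, ha, hb⟩
    exact ⟨G.bi_symm a b h, hb, ha⟩

/-- Type of an edge as traversed along a walk. -/
inductive EType : Type
  | fwd   -- a → b
  | bwd   -- a ← b
  | bidir -- a ↔ b
deriving DecidableEq

/-- The step relation of a walk. -/
def step (G : MixedGraph V) (a : V) (e : EType) (b : V) : Prop :=
  match e with
  | .fwd => G.dir a b
  | .bwd => G.dir b a
  | .bidir => G.bi a b

/-- A walk starting at a vertex, given by a list of (edge type, next vertex). -/
def IsWalk (G : MixedGraph V) : V → List (EType × V) → Prop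
  | _, [] => True
  | a, (e, b) :: rest => G.step a e b ∧ IsWalk G b rest

/-- The final vertex of a walk. -/
def walkEnd : V → List (EType × V) → V
  | a, [] => a
  | _, (_, b) :: rest => walkEnd b rest

/-- `b` is a descendant of `a` (along directed edges, reflexively). -/
def Desc (G : MixedGraph V) : V → V → Prop :=
  Relation.ReflTransGen G.dir

/-- Whether an interior vertex between two consecutive steps is a collider:
an arrowhead on both sides. -/
def colliderAt (e₁ e₂ : EType) : Prop :=
  (e₁ = EType.fwd ∨ e₁ = EType.bidir) ∧ (e₂ = EType.bwd ∨ e₂ = EType.bidir)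

/-- A walk is active (d-connecting) given a conditioning set `S`:
every interior non-collider lies outside `S` and every interior collider
is in `S` or has a descendant in `S`. -/
def Active (G : MixedGraph V) (S : Set V) : List (EType × V) → Prop
  | [] => True
  | [_] => True
  | (e₁, b) :: (e₂, c) :: rest =>
      ((colliderAt e₁ e₂ ∧ ∃ d ∈ S, G.Desc b d) ∨ (¬ colliderAt e₁ e₂ ∧ b ∉ S))
      ∧ Active G S ((e₂, c) :: rest)

/-- The walk contains an (interior) collider belonging to `T`. -/
def HasColliderIn (G : MixedGraph V) (T : Set V) : List (EType × V) → Prop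
  | (e₁, b) :: (e₂, c) :: rest =>
      (colliderAt e₁ e₂ ∧ b ∈ T) ∨ HasColliderIn G T ((e₂, c) :: rest)
  | _ => False

/-- `X` and `Y` are d-connected given `S`: some active walk joins them. -/
def DConn (G : MixedGraph V) (S X Y : Set V) : Prop :=
  ∃ x ∈ X, ∃ w : List (EType × V),
    w ≠ [] ∧ G.IsWalk x w ∧ walkEnd x w ∈ Y ∧ G.Active S w

/-- d-separation: no active walk between `X` and `Y` given `S`. -/
def DSep (G : MixedGraph V) (S X Y : Set V) : Prop :=
  ¬ G.DConn S X Y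

end MixedGraph

open scoped Classical

/-- `f` depends only on the endogenous coordinates in `S` and the latent
coordinates in `T`. -/
def DependsOnlyOn {V U : Type} {val : V → Type} {uval : U → Type}
    (f : (∀ i, val i) → (∀ u, uval u) → ℝ) (S : Set V) (T : Set U) : Prop :=
  ∀ v v' u u', (∀ i ∈ S, v i = v' i) → (∀ j ∈ T, u j = u' j) → f v u = f v' u'

open MixedGraph in
/-- C-DAG as Bayesian network: if the joint distribution `P`
factorizes according to the ADMG `G` (with latent parent relation `L`
realizing the bidirected edges), then `P` also factorizes according to the
quotient C-DAG: there are latent sets `U' c` whose pairwise intersections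
match the bidirected edges of the C-DAG, and cluster kernels depending only
on the cluster and its C-DAG parents, reproducing `P`. -/
theorem stmt10 {V U I : Type}
    [Fintype V] [Fintype U] [Fintype I] [DecidableEq V] [DecidableEq U]
    {val : V → Type} {uval : U → Type}
    [∀ i, Fintype (val i)] [∀ u, Fintype (uval u)]
    (G : MixedGraph V) (hG : G.Acyclic)
    (π : V → I) (hsurj : Function.Surjective π) (hq : (G.quot π).Acyclic)
    (L : U → V → Prop)
    (hbi : ∀ a b, G.bi a b ↔ a ≠ b ∧ ∃ u, L u a ∧ L u b)
    (Pu : (∀ u, uval u) → ℝ)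
    (P : (∀ i, val i) → ℝ)
    (f : ∀ _ : V, (∀ i, val i) → (∀ u, uval u) → ℝ)
    (hdep : ∀ k, DependsOnlyOn (f k) ({k} ∪ {i | G.dir i k}) {u | L u k})
    (hfact : ∀ v, P v = ∑ uu : ∀ j, uval j, Pu uu * ∏ k : V, f k v uu) :
    ∃ (U' : I → Set U) (g : ∀ _ : I, (∀ i, val i) → (∀ u, uval u) → ℝ),
      (∀ c, DependsOnlyOn (g c)
          ({i | π i = c} ∪ {i | (G.quot π).dir (π i) c}) (U' c)) ∧
      (∀ i j, i ≠ j → ((U' i ∩ U' j).Nonempty ↔ (G.quot π).bi i j)) ∧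
      (∀ v, P v = ∑ uu : ∀ j, uval j, Pu uu * ∏ c : I, g c v uu) := by
  refine ⟨fun c => {u | ∃ a, π a = c ∧ L u a},
    fun c v uu => ∏ k ∈ Finset.univ.filter (fun k => π k = c), f k v uu,
    ?_, ?_, ?_⟩
  · intro c v v' u u' hv hu
    refine Finset.prod_congr rfl ?_
    intro k hk
    simp only [Finset.mem_filter] at hk
    refine hdep k v v' u u' ?_ ?_
    · intro i hi
      rcases hi with hi | hi
      · exact hv i (Or.inl (by simpa using hi ▸ hk.2))
      · by_cases h : π i = c
        · exact hv i (Or.inl h)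
        · refine hv i (Or.inr ?_)
          exact ⟨by simpa [hk.2] using h, i, k, rfl, hk.2, hi⟩
    · intro j hj
      exact hu j ⟨k, hk.2, hj⟩
  · intro i j hij
    constructor
    · rintro ⟨u, ⟨a, ha, hla⟩, ⟨b, hb, hlb⟩⟩
      refine ⟨hij, a, b, ha, hb, ?_⟩
      exact (hbi a b).2 ⟨fun h => hij (by rw [← ha, ← hb, h]), u, hla, hlb⟩
    · rintro ⟨hne, a, b, ha, hb, hab⟩
      rcases (hbi a b).1 hab with ⟨-, u, hua, hub⟩
      exact ⟨u, ⟨a, ha, hua⟩, ⟨b, hb, hub⟩⟩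
  · intro v
    rw [hfact v]
    refine Finset.sum_congr rfl fun uu _ => ?_
    congr 1
    exact (Finset.prod_fiberwise_of_maps_to (fun k _ => Finset.mem_univ (π k))
      (fun k => f k v uu)).symm
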